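/- Fix n ≥ 1 and define, in MvPolynomial (Fin n) ℝ, the quadratic bracket on generators by b(i,j) = X_i X_j if i < j, b(i,j) = −X_i X_j if i > j, and b(i,i) = 0. Let Δ : MvPolynomial (Fin n) ℝ → MvPolynomial (Fin n) ℝ ⊗ MvPolynomial (Fin n) ℝ be the algebra homomorphism with Δ(X_i) = X_0 ⊗ X_i (the comultiplication of the 'first-column' algebra of n×n matrices with nonzero entries only in the first column). Then for all i, j: Δ(b(i,j)) = b(0,0) ⊗ (X_i X_j) + (X_0 X_0) ⊗ b(i,j), i.e. Δ({x^i,x^j}) = {Δ(x^i), Δ(x^j)} for the product bracket, so the bracket {x^i,x^j} = x^i x^j (i < j) is compatible with the first-column algebra structure. -/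
import Mathlib


open scoped TensorProduct
open MvPolynomial

/-- **Example of [FRT].** The quadratic bracket `{x^i,x^j} = x^i x^j` for
`i < j` is compatible with the "first column algebra" structure, whose comultiplication is
`Δ(x^i) = x^0 ⊗ x^i`: for the bracket `b i j = X i * X j` (`i < j`), `= -(X i * X j)`
(`i > j`), `= 0` (`i = j`), one has
`Δ(b i j) = b 0 0 ⊗ (X i X j) + (X 0 X 0) ⊗ b i j`, i.e. `Δ({x^i,x^j}) = {Δ(x^i),Δ(x^j)}`. -/
theorem first_column_algebra_bracket_compatible
    (n : ℕ) (hn : 1 ≤ n)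
    (b : Fin n → Fin n → MvPolynomial (Fin n) ℝ)
    (hb : ∀ i j : Fin n, b i j =
      if i < j then X i * X j else if j < i then -(X i * X j) else 0)
    (Δ : MvPolynomial (Fin n) ℝ →ₐ[ℝ] (MvPolynomial (Fin n) ℝ ⊗[ℝ] MvPolynomial (Fin n) ℝ))
    (hΔ : ∀ i : Fin n, Δ (X i) = (X ⟨0, hn⟩ : MvPolynomial (Fin n) ℝ) ⊗ₜ (X i : MvPolynomial (Fin n) ℝ)) :
    ∀ i j : Fin n,
      Δ (b i j) = b ⟨0, hn⟩ ⟨0, hn⟩ ⊗ₜ ((X i : MvPolynomial (Fin n) ℝ) * X j)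
        + ((X ⟨0, hn⟩ : MvPolynomial (Fin n) ℝ) * X ⟨0, hn⟩) ⊗ₜ b i j := by
  intro i j
  have h0 : b ⟨0, hn⟩ ⟨0, hn⟩ = 0 := by simp [hb]
  have key : ∀ k l : Fin n, Δ (X k * X l) =
      ((X ⟨0, hn⟩ : MvPolynomial (Fin n) ℝ) * X ⟨0, hn⟩) ⊗ₜ (X k * X l) := by
    intro k l
    rw [map_mul, hΔ, hΔ, Algebra.TensorProduct.tmul_mul_tmul]
  rw [h0, TensorProduct.zero_tmul, zero_add, hb i j]
  rcases lt_trichotomy i j with h | h | h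
  · simp [h, key]
  · simp [h]
  · simp [h, not_lt.mpr h.le, key, TensorProduct.tmul_neg]
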